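/- arXiv:2103.05429 — 3 statements merged into one kernel-verified Lean document; each statement's English description precedes it below -/
import Mathlib

section
/- (Lipschitz continuity of the N-agent fast-reaction velocity map.) Fix N ≥ 1, ε > 0, a compact metric space U with probability measure η, bounded Lipschitz J : ℝ^d × U × ℝ^d → ℝ and e : ℝ^d × U → ℝ^d. For x = (x₁,…,x_N) ∈ [ℝ^d]^N define σᵢ^J(x)(u) = exp((1/(εN))Σⱼ J(xᵢ,u,xⱼ)) / ∫_U exp((1/(εN))Σⱼ J(xᵢ,v,xⱼ)) dη(v) and vᵢ^J(x) = ∫_U e(xᵢ,u)σᵢ^J(x)(u) dη(u). Then the map v^J : [ℝ^d]^N → [ℝ^d]^N, x ↦ (v₁^J(x),…,v_N^J(x)), is Lipschitz with respect to the norm ‖x‖_N = (1/N)Σᵢ‖xᵢ‖, with Lipschitz constant L = L(J, e, ε) independent of N. -/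
open MeasureTheory Real

/-!
Agent `i` moves with the average of `e (x i) ·` under the Gibbs density `∝ exp aᵢ` on `U`,
where the potential `aᵢ = (1/(εN)) ∑ⱼ J (x i) · (x j)` is bounded by `c = M / |ε|` uniformly
in `N`. Then the partition function is at least `exp (-c)`, and a Gibbs average is Lipschitz
in the potential and in the integrand (sup norms) with constants depending only on `c`.
Since `aᵢ` moves by at most `c (‖x i - x' i‖ + ‖x - x'‖_N)` (the mean-field term is the
`W₁`-bound for the two empirical measures), each velocity moves by
`O(‖x i - x' i‖ + ‖x - x'‖_N)`, and averaging over `i` gives the claim with twice that constant.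
-/

/-- Gibbs strategy of agent `i` in the `N`-agent fast-reaction system. -/
noncomputable def frStrategy {U : Type*} [MeasurableSpace U] {d N : ℕ}
    (η : Measure U) (ε : ℝ)
    (J : EuclideanSpace ℝ (Fin d) → U → EuclideanSpace ℝ (Fin d) → ℝ)
    (x : Fin N → EuclideanSpace ℝ (Fin d)) (i : Fin N) (u : U) : ℝ :=
  Real.exp ((1 / (ε * N)) * ∑ j, J (x i) u (x j))
    / ∫ v, Real.exp ((1 / (ε * N)) * ∑ j, J (x i) v (x j)) ∂η

/-- Fast-reaction velocity of agent `i`. -/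
noncomputable def frVelocity {U : Type*} [MeasurableSpace U] {d N : ℕ}
    (η : Measure U) (ε : ℝ)
    (J : EuclideanSpace ℝ (Fin d) → U → EuclideanSpace ℝ (Fin d) → ℝ)
    (e : EuclideanSpace ℝ (Fin d) → U → EuclideanSpace ℝ (Fin d))
    (x : Fin N → EuclideanSpace ℝ (Fin d)) (i : Fin N) : EuclideanSpace ℝ (Fin d) :=
  ∫ u, frStrategy η ε J x i u • e (x i) u ∂η

theorem abs_exp_sub_exp_le_of_abs_le {c s t : ℝ} (hs : |s| ≤ c) (ht : |t| ≤ c) :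
    |exp s - exp t| ≤ exp c * |s - t| := by
  wlog hts : t ≤ s generalizing s t
  · rw [abs_sub_comm, abs_sub_comm s]
    exact this ht hs (le_of_not_ge hts)
  have hexp : exp s * exp (t - s) = exp t := by rw [← exp_add]; ring_nf
  rw [abs_of_nonneg (sub_nonneg.2 (exp_le_exp.2 hts)), abs_of_nonneg (sub_nonneg.2 hts)]
  calc exp s - exp t = exp s * (1 - exp (t - s)) := by rw [mul_sub, hexp, mul_one]
    _ ≤ exp s * (s - t) :=
      mul_le_mul_of_nonneg_left (by linarith [add_one_le_exp (t - s)]) (exp_pos s).le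
    _ ≤ exp c * (s - t) :=
      mul_le_mul_of_nonneg_right (exp_le_exp.2 ((le_abs_self s).trans hs)) (sub_nonneg.2 hts)

section Gibbs

variable {U E : Type*} [MeasurableSpace U] [NormedAddCommGroup E] [NormedSpace ℝ E]
  (η : Measure U) {a a' : U → ℝ} {c δ : ℝ}

noncomputable def gibbsDensity (a : U → ℝ) (u : U) : ℝ :=
  exp (a u) / ∫ v, exp (a v) ∂η

noncomputable def gibbsAverage (a : U → ℝ) (f : U → E) : E :=
  ∫ u, gibbsDensity η a u • f u ∂η

theorem gibbsDensity_nonneg (a : U → ℝ) (u : U) : 0 ≤ gibbsDensity η a u :=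
  div_nonneg (exp_pos _).le (integral_nonneg fun _ => (exp_pos _).le)

theorem integrable_exp_of_abs_le [IsFiniteMeasure η] (ha : Measurable a)
    (hac : ∀ u, |a u| ≤ c) : Integrable (fun u => exp (a u)) η :=
  (integrable_const (exp c)).mono' (measurable_exp.comp ha).aestronglyMeasurable
    (ae_of_all _ fun u => by
      rw [norm_of_nonneg (exp_pos _).le]
      exact exp_le_exp.2 ((le_abs_self _).trans (hac u)))

theorem exp_neg_le_integral_exp [IsProbabilityMeasure η] (ha : Measurable a)
    (hac : ∀ u, |a u| ≤ c) : exp (-c) ≤ ∫ v, exp (a v) ∂η := by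
  simpa using integral_mono (integrable_const (exp (-c))) (integrable_exp_of_abs_le η ha hac)
    fun u => exp_le_exp.2 (neg_le_of_abs_le (hac u))

theorem inv_integral_exp_le [IsProbabilityMeasure η] (ha : Measurable a)
    (hac : ∀ u, |a u| ≤ c) : (∫ v, exp (a v) ∂η)⁻¹ ≤ exp c := by
  simpa [exp_neg] using inv_anti₀ (exp_pos _) (exp_neg_le_integral_exp η ha hac)

theorem gibbsDensity_le [IsProbabilityMeasure η] (ha : Measurable a) (hac : ∀ u, |a u| ≤ c)
    (u : U) : gibbsDensity η a u ≤ exp (2 * c) := by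
  calc gibbsDensity η a u = exp (a u) * (∫ v, exp (a v) ∂η)⁻¹ := div_eq_mul_inv _ _
    _ ≤ exp c * exp c := by
      gcongr
      · exact (le_abs_self _).trans (hac u)
      · exact inv_integral_exp_le η ha hac
    _ = exp (2 * c) := by rw [← exp_add, two_mul]

theorem abs_integral_exp_sub_le [IsProbabilityMeasure η] (ha : Measurable a)
    (ha' : Measurable a') (hac : ∀ u, |a u| ≤ c) (ha'c : ∀ u, |a' u| ≤ c)
    (hd : ∀ u, |a u - a' u| ≤ δ) :
    |∫ v, exp (a v) ∂η - ∫ v, exp (a' v) ∂η| ≤ exp c * δ := by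
  rw [← integral_sub (integrable_exp_of_abs_le η ha hac) (integrable_exp_of_abs_le η ha' ha'c),
    ← norm_eq_abs]
  suffices h : ∀ u, ‖exp (a u) - exp (a' u)‖ ≤ exp c * δ by
    simpa using norm_integral_le_of_norm_le_const (μ := η) (ae_of_all _ h)
  exact fun u => (abs_exp_sub_exp_le_of_abs_le (hac u) (ha'c u)).trans (by gcongr; exact hd u)

theorem abs_gibbsDensity_sub_le [IsProbabilityMeasure η] (ha : Measurable a)
    (ha' : Measurable a') (hac : ∀ u, |a u| ≤ c) (ha'c : ∀ u, |a' u| ≤ c)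
    (hd : ∀ u, |a u - a' u| ≤ δ) (u : U) :
    |gibbsDensity η a u - gibbsDensity η a' u| ≤ (exp (2 * c) + exp (4 * c)) * δ := by
  set Z := ∫ v, exp (a v) ∂η
  set Z' := ∫ v, exp (a' v) ∂η
  have hZ : 0 < Z := (exp_pos _).trans_le (exp_neg_le_integral_exp η ha hac)
  have hZ' : 0 < Z' := (exp_pos _).trans_le (exp_neg_le_integral_exp η ha' ha'c)
  have hsplit : gibbsDensity η a u - gibbsDensity η a' u
      = (exp (a u) - exp (a' u)) * Z⁻¹ + exp (a' u) * (Z' - Z) * Z⁻¹ * Z'⁻¹ := by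
    change exp (a u) / Z - exp (a' u) / Z' = _
    field_simp
    ring
  have hδ : 0 ≤ δ := (abs_nonneg _).trans (hd u)
  have hnum : |exp (a u) - exp (a' u)| ≤ exp c * δ :=
    (abs_exp_sub_exp_le_of_abs_le (hac u) (ha'c u)).trans (by gcongr; exact hd u)
  have hexp : exp (a' u) ≤ exp c := exp_le_exp.2 ((le_abs_self _).trans (ha'c u))
  have hZZ' := abs_integral_exp_sub_le η ha ha' hac ha'c hd
  have hZinv := inv_integral_exp_le η ha hac
  have hZ'inv := inv_integral_exp_le η ha' ha'c
  calc |gibbsDensity η a u - gibbsDensity η a' u|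
      ≤ |exp (a u) - exp (a' u)| * Z⁻¹ + exp (a' u) * |Z - Z'| * Z⁻¹ * Z'⁻¹ := by
        rw [hsplit, abs_sub_comm Z]
        refine (abs_add_le _ _).trans_eq ?_
        simp only [abs_mul, abs_of_pos (exp_pos _), abs_of_pos (inv_pos.2 hZ),
          abs_of_pos (inv_pos.2 hZ')]
    _ ≤ (exp c * δ) * exp c + exp c * (exp c * δ) * exp c * exp c := by gcongr
    _ = (exp (2 * c) + exp (4 * c)) * δ := by
        rw [show 4 * c = c + c + c + c by ring, two_mul]
        simp only [exp_add]
        ring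

theorem integrable_gibbsDensity_smul [IsProbabilityMeasure η] {f : U → E} {K : ℝ}
    (ha : Measurable a) (hac : ∀ u, |a u| ≤ c) (hf : AEStronglyMeasurable f η)
    (hfK : ∀ u, ‖f u‖ ≤ K) : Integrable (fun u => gibbsDensity η a u • f u) η := by
  refine (integrable_const (exp (2 * c) * K)).mono'
    (((measurable_exp.comp ha).div_const _).aestronglyMeasurable.smul hf) (ae_of_all _ fun u => ?_)
  rw [norm_smul, norm_of_nonneg (gibbsDensity_nonneg η a u)]
  exact mul_le_mul (gibbsDensity_le η ha hac u) (hfK u) (norm_nonneg _) (exp_pos _).le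

theorem norm_gibbsAverage_sub_le [IsProbabilityMeasure η] {f f' : U → E} {K ρ : ℝ}
    (ha : Measurable a) (ha' : Measurable a') (hac : ∀ u, |a u| ≤ c) (ha'c : ∀ u, |a' u| ≤ c)
    (hd : ∀ u, |a u - a' u| ≤ δ) (hf : AEStronglyMeasurable f η)
    (hf' : AEStronglyMeasurable f' η) (hfK : ∀ u, ‖f u‖ ≤ K) (hf'K : ∀ u, ‖f' u‖ ≤ K)
    (hff' : ∀ u, ‖f u - f' u‖ ≤ ρ) :
    ‖gibbsAverage η a f - gibbsAverage η a' f'‖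
      ≤ exp (2 * c) * ρ + (exp (2 * c) + exp (4 * c)) * δ * K := by
  rw [gibbsAverage, gibbsAverage, ← integral_sub (integrable_gibbsDensity_smul η ha hac hf hfK)
    (integrable_gibbsDensity_smul η ha' ha'c hf' hf'K)]
  suffices h : ∀ u, ‖gibbsDensity η a u • f u - gibbsDensity η a' u • f' u‖
      ≤ exp (2 * c) * ρ + (exp (2 * c) + exp (4 * c)) * δ * K by
    simpa using norm_integral_le_of_norm_le_const (μ := η) (ae_of_all _ h)
  intro u
  have hσ := gibbsDensity_le η ha hac u
  have hσd := abs_gibbsDensity_sub_le η ha ha' hac ha'c hd u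
  have hδK : 0 ≤ (exp (2 * c) + exp (4 * c)) * δ := (abs_nonneg _).trans hσd
  have hf'u := hf'K u
  have hff'u := hff' u
  set σ := gibbsDensity η a u
  set σ' := gibbsDensity η a' u
  calc ‖σ • f u - σ' • f' u‖ = ‖σ • (f u - f' u) + (σ - σ') • f' u‖ := by
        rw [smul_sub, sub_smul, sub_add_sub_cancel]
    _ ≤ σ * ‖f u - f' u‖ + |σ - σ'| * ‖f' u‖ := by
        refine (norm_add_le _ _).trans_eq ?_
        rw [norm_smul, norm_smul, norm_of_nonneg (gibbsDensity_nonneg η a u), Real.norm_eq_abs]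
    _ ≤ exp (2 * c) * ρ + (exp (2 * c) + exp (4 * c)) * δ * K := by gcongr

end Gibbs

section MeanField

variable {X U : Type*} {N : ℕ} {M : ℝ} {J : X → U → X → ℝ}

theorem abs_meanField_le (ε : ℝ) (hN : 0 < N) (hJb : ∀ y u y', |J y u y'| ≤ M) (y : X) (u : U)
    (x : Fin N → X) : |(1 / (ε * N)) * ∑ j, J y u (x j)| ≤ |ε|⁻¹ * M := by
  calc |(1 / (ε * N)) * ∑ j, J y u (x j)| ≤ |1 / (ε * N)| * ∑ _j : Fin N, M := by
        rw [abs_mul]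
        gcongr
        exact (Finset.abs_sum_le_sum_abs _ _).trans (Finset.sum_le_sum fun j _ => hJb _ _ _)
    _ = |ε|⁻¹ * M := by
        rw [Finset.sum_const, Finset.card_univ, Fintype.card_fin, nsmul_eq_mul, abs_div, abs_one,
          abs_mul, Nat.abs_cast]
        field_simp

theorem abs_meanField_sub_le [SeminormedAddCommGroup X] (ε : ℝ) (hN : 0 < N)
    (hJL : ∀ y₁ y₂ u y₁' y₂', |J y₁ u y₁' - J y₂ u y₂'| ≤ M * (‖y₁ - y₂‖ + ‖y₁' - y₂'‖))
    (y y' : X) (u : U) (x x' : Fin N → X) :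
    |(1 / (ε * N)) * ∑ j, J y u (x j) - (1 / (ε * N)) * ∑ j, J y' u (x' j)|
      ≤ |ε|⁻¹ * M * (‖y - y'‖ + (1 / (N : ℝ)) * ∑ j, ‖x j - x' j‖) := by
  rw [← mul_sub, ← Finset.sum_sub_distrib, abs_mul]
  calc |1 / (ε * N)| * |∑ j, (J y u (x j) - J y' u (x' j))|
      ≤ |1 / (ε * N)| * ∑ j, M * (‖y - y'‖ + ‖x j - x' j‖) := by
        gcongr
        exact (Finset.abs_sum_le_sum_abs _ _).trans (Finset.sum_le_sum fun j _ => hJL _ _ _ _ _)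
    _ = |ε|⁻¹ * M * (‖y - y'‖ + (1 / (N : ℝ)) * ∑ j, ‖x j - x' j‖) := by
        rw [← Finset.mul_sum, Finset.sum_add_distrib, Finset.sum_const, Finset.card_univ,
          Fintype.card_fin, nsmul_eq_mul, abs_div, abs_one, abs_mul, Nat.abs_cast]
        field_simp

end MeanField

theorem mean_le_two_mul_mean {N : ℕ} (hN : 0 < N) {K : ℝ} {a b : Fin N → ℝ}
    (h : ∀ i, a i ≤ K * (b i + (1 / (N : ℝ)) * ∑ j, b j)) :
    (1 / (N : ℝ)) * ∑ i, a i ≤ 2 * K * ((1 / (N : ℝ)) * ∑ i, b i) := by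
  calc (1 / (N : ℝ)) * ∑ i, a i
      ≤ (1 / (N : ℝ)) * ∑ i, K * (b i + (1 / (N : ℝ)) * ∑ j, b j) := by
        gcongr with i
        exact h i
    _ = 2 * K * ((1 / (N : ℝ)) * ∑ i, b i) := by
        rw [← Finset.mul_sum, Finset.sum_add_distrib, Finset.sum_const, Finset.card_univ,
          Fintype.card_fin, nsmul_eq_mul]
        field_simp
        ring

section FastReaction

variable {U : Type*} [MeasurableSpace U] {d N : ℕ} (η : Measure U) {ε M Me : ℝ}
  {J : EuclideanSpace ℝ (Fin d) → U → EuclideanSpace ℝ (Fin d) → ℝ}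
  {e : EuclideanSpace ℝ (Fin d) → U → EuclideanSpace ℝ (Fin d)}

theorem frVelocity_eq_gibbsAverage (x : Fin N → EuclideanSpace ℝ (Fin d)) (i : Fin N) :
    frVelocity η ε J e x i
      = gibbsAverage η (fun u => (1 / (ε * N)) * ∑ j, J (x i) u (x j)) (e (x i)) :=
  rfl

theorem exists_norm_frVelocity_sub_le [MetricSpace U] [BorelSpace U] [IsProbabilityMeasure η]
    (hJb : ∀ y u y', |J y u y'| ≤ M)
    (hJL : ∀ y₁ y₂ u₁ u₂ y₁' y₂', |J y₁ u₁ y₁' - J y₂ u₂ y₂'|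
      ≤ M * (‖y₁ - y₂‖ + dist u₁ u₂ + ‖y₁' - y₂'‖))
    (heb : ∀ x u, ‖e x u‖ ≤ Me)
    (heL : ∀ x₁ x₂ u₁ u₂, ‖e x₁ u₁ - e x₂ u₂‖ ≤ Me * (‖x₁ - x₂‖ + dist u₁ u₂)) :
    ∃ K : ℝ, ∀ N : ℕ, 0 < N → ∀ (x x' : Fin N → EuclideanSpace ℝ (Fin d)) (i : Fin N),
      ‖frVelocity η ε J e x i - frVelocity η ε J e x' i‖
        ≤ K * (‖x i - x' i‖ + (1 / (N : ℝ)) * ∑ j, ‖x j - x' j‖) := by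
  obtain ⟨u₀⟩ := nonempty_of_isProbabilityMeasure η
  have hMe : 0 ≤ Me := (norm_nonneg _).trans (heb 0 u₀)
  set c := |ε|⁻¹ * M
  have hc : 0 ≤ c := mul_nonneg (inv_nonneg.2 (abs_nonneg ε)) ((abs_nonneg _).trans (hJb 0 u₀ 0))
  have hJu : ∀ y y', Continuous fun u => J y u y' := fun y y' =>
    (LipschitzWith.of_dist_le' fun u₁ u₂ => by
      simpa [Real.dist_eq] using hJL y y u₁ u₂ y' y').continuous
  have heu : ∀ y, Continuous (e y) := fun y =>
    (LipschitzWith.of_dist_le' fun u₁ u₂ => by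
      simpa [dist_eq_norm] using heL y y u₁ u₂).continuous
  have hJy : ∀ y₁ y₂ u y₁' y₂', |J y₁ u y₁' - J y₂ u y₂'|
      ≤ M * (‖y₁ - y₂‖ + ‖y₁' - y₂'‖) := fun y₁ y₂ u y₁' y₂' => by
    simpa using hJL y₁ y₂ u u y₁' y₂'
  refine ⟨exp (2 * c) * Me + (exp (2 * c) + exp (4 * c)) * c * Me, fun N hN x x' i => ?_⟩
  set D := ‖x i - x' i‖ + (1 / (N : ℝ)) * ∑ j, ‖x j - x' j‖
  have hΔD : ‖x i - x' i‖ ≤ D := le_add_of_nonneg_right (by positivity)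
  have hpot : ∀ z : Fin N → EuclideanSpace ℝ (Fin d),
      Measurable fun u => (1 / (ε * N)) * ∑ j, J (z i) u (z j) := fun z =>
    (continuous_const.mul (continuous_finsetSum _ fun j _ => hJu _ _)).measurable
  rw [frVelocity_eq_gibbsAverage, frVelocity_eq_gibbsAverage]
  calc _ ≤ exp (2 * c) * (Me * ‖x i - x' i‖) + (exp (2 * c) + exp (4 * c)) * (c * D) * Me :=
        norm_gibbsAverage_sub_le η (hpot x) (hpot x') (abs_meanField_le ε hN hJb _ · x)
          (abs_meanField_le ε hN hJb _ · x') (abs_meanField_sub_le ε hN hJy _ _ · x x')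
          (heu _).aestronglyMeasurable (heu _).aestronglyMeasurable (heb _) (heb _)
          fun u => by simpa using heL (x i) (x' i) u u
    _ ≤ exp (2 * c) * (Me * D) + (exp (2 * c) + exp (4 * c)) * (c * D) * Me := by gcongr
    _ = (exp (2 * c) * Me + (exp (2 * c) + exp (4 * c)) * c * Me) * D := by ring

end FastReaction

theorem frVelocity_lipschitz_general
    {U : Type*} [MetricSpace U] [MeasurableSpace U] [BorelSpace U]
    {d : ℕ} (η : Measure U) [IsProbabilityMeasure η]
    (ε M Me : ℝ)
    (J : EuclideanSpace ℝ (Fin d) → U → EuclideanSpace ℝ (Fin d) → ℝ)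
    (hJb : ∀ y u y', |J y u y'| ≤ M)
    (hJL : ∀ y₁ y₂ u₁ u₂ y₁' y₂', |J y₁ u₁ y₁' - J y₂ u₂ y₂'|
      ≤ M * (‖y₁ - y₂‖ + dist u₁ u₂ + ‖y₁' - y₂'‖))
    (e : EuclideanSpace ℝ (Fin d) → U → EuclideanSpace ℝ (Fin d))
    (heb : ∀ x u, ‖e x u‖ ≤ Me)
    (heL : ∀ x₁ x₂ u₁ u₂, ‖e x₁ u₁ - e x₂ u₂‖ ≤ Me * (‖x₁ - x₂‖ + dist u₁ u₂)) :
    ∃ L : ℝ, 0 < L ∧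
      ∀ (N : ℕ), 0 < N →
      ∀ x x' : Fin N → EuclideanSpace ℝ (Fin d),
        (1 / (N : ℝ)) * ∑ i, ‖frVelocity η ε J e x i - frVelocity η ε J e x' i‖
          ≤ L * ((1 / (N : ℝ)) * ∑ i, ‖x i - x' i‖) := by
  obtain ⟨K, hK⟩ := exists_norm_frVelocity_sub_le η hJb hJL heb heL
  refine ⟨max (2 * K) 1, by positivity, fun N hN x x' => ?_⟩
  calc _ ≤ 2 * K * ((1 / (N : ℝ)) * ∑ i, ‖x i - x' i‖) :=
        mean_le_two_mul_mean hN fun i => hK N hN x x' i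
    _ ≤ _ := by gcongr; exact le_max_left _ _

/-- The `N`-agent fast-reaction velocity map is Lipschitz for the mean norm `‖·‖_N`,
with a Lipschitz constant depending only on `J`, `e`, `ε` (not on `N`). -/
theorem frVelocity_lipschitz
    {U : Type*} [MetricSpace U] [CompactSpace U] [MeasurableSpace U] [BorelSpace U]
    {d : ℕ} (η : Measure U) [IsProbabilityMeasure η]
    (ε M Me : ℝ) (hε : 0 < ε) (hM : 0 < M)
    (J : EuclideanSpace ℝ (Fin d) → U → EuclideanSpace ℝ (Fin d) → ℝ)
    (hJb : ∀ y u y', |J y u y'| ≤ M)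
    (hJL : ∀ y₁ y₂ u₁ u₂ y₁' y₂', |J y₁ u₁ y₁' - J y₂ u₂ y₂'|
      ≤ M * (‖y₁ - y₂‖ + dist u₁ u₂ + ‖y₁' - y₂'‖))
    (e : EuclideanSpace ℝ (Fin d) → U → EuclideanSpace ℝ (Fin d))
    (heb : ∀ x u, ‖e x u‖ ≤ Me)
    (heL : ∀ x₁ x₂ u₁ u₂, ‖e x₁ u₁ - e x₂ u₂‖ ≤ Me * (‖x₁ - x₂‖ + dist u₁ u₂))
    (hem : ∀ x, Measurable (e x)) :
    ∃ L : ℝ, 0 < L ∧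
      ∀ (N : ℕ), 0 < N →
      ∀ x x' : Fin N → EuclideanSpace ℝ (Fin d),
        (1 / (N : ℝ)) * ∑ i, ‖frVelocity η ε J e x i - frVelocity η ε J e x' i‖
          ≤ L * ((1 / (N : ℝ)) * ∑ i, ‖x i - x' i‖) :=
  frVelocity_lipschitz_general η ε M Me J hJb hJL e heb heL
end

section
/- (Compatibility/invariance of the entropic replicator direction.) Let U be a measurable space with probability measure η, ε > 0, λ > 0, and J bounded with ‖J‖_∞ < ∞. Choose 0 < a < exp(−2‖J‖_∞/ε) and b > exp(2‖J‖_∞/ε + K_{a,b}) where K_{a,b} = (a(b−1)/(b−a))log a + (b(1−a)/(b−a))log b. Then for every σ ∈ S_{a,b} = {σ : U → [a,b] measurable, ∫σ dη = 1} and every x, x' ∈ ℝ^d, σ' ∈ S_{a,b}, there exists θ > 0 such that σ + θλ(f^J(x,σ,x',σ') + f^ε(σ)) ∈ S_{a,b}. -/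
open MeasureTheory Real

/-- The replicator interaction term `f^J`. -/
noncomputable def fJ {U : Type*} [MeasurableSpace U] {d : ℕ}
    (η : Measure U)
    (J : EuclideanSpace ℝ (Fin d) → U → EuclideanSpace ℝ (Fin d) → U → ℝ)
    (x : EuclideanSpace ℝ (Fin d)) (σ : U → ℝ)
    (x' : EuclideanSpace ℝ (Fin d)) (σ' : U → ℝ) (u : U) : ℝ :=
  ((∫ u', J x u x' u' * σ' u' ∂η)
    - ∫ v, (∫ u', J x v x' u' * σ' u' ∂η) * σ v ∂η) * σ u

/-- The entropic term `f^ε`. -/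
noncomputable def fEps {U : Type*} [MeasurableSpace U]
    (η : Measure U) (ε : ℝ) (σ : U → ℝ) (u : U) : ℝ :=
  ε * (-(Real.log (σ u)) + ∫ v, Real.log (σ v) * σ v ∂η) * σ u

open Set


/-!
Both `f^J` and `f^ε` are replicator fields `(F u - ∫ F σ dη) σ u`, for the fitnesses
`A u = ∫ J(x,u,x',u') σ'(u') dη(u')` and `-ε log σ u` respectively, so `f^J + f^ε` is the replicator
field of `F = A - ε log σ`, and it integrates to zero since `∫ σ dη = 1`.

As `|A| ≤ M`, the mean fitness `∫ F σ dη` lies in `[-M - ε K_{a,b}, M]`: the entropy `∫ σ log σ dη`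
is nonnegative by Jensen, and at most `K_{a,b}` because `t log t` lies below its chord on `[a,b]`
and `∫ σ dη = 1`. Hence `F u ≥ M` where `σ u ≤ exp(-2M/ε)` and `F u ≤ -M - ε K_{a,b}` where
`σ u ≥ exp(2M/ε + K_{a,b})`: the field points into `[a,b]` near both ends, and since it is bounded,
a small enough step keeps every value in `[a,b]`.
-/

theorem add_mem_Icc_of_inward {a b e₁ e₂ s y δ : ℝ} (hs : s ∈ Icc a b) (hy : |y| ≤ δ)
    (hδ₁ : δ ≤ e₁ - a) (hδ₂ : δ ≤ b - e₂) (hlow : s ≤ e₁ → 0 ≤ y) (hhigh : e₂ ≤ s → y ≤ 0) :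
    s + y ∈ Icc a b := by
  obtain ⟨hy₁, hy₂⟩ := abs_le.1 hy
  constructor
  · rcases le_or_gt s e₁ with h | h
    · linarith [hs.1, hlow h]
    · linarith
  · rcases le_or_gt e₂ s with h | h
    · linarith [hs.2, hhigh h]
    · linarith

theorem exists_pos_forall_add_mul_mem_Icc {ι : Type*} {s g : ι → ℝ} {a b e₁ e₂ C : ℝ}
    (hs : ∀ i, s i ∈ Icc a b) (hg : ∀ i, |g i| ≤ C) (ha : a < e₁) (hb : e₂ < b)
    (hlow : ∀ i, s i ≤ e₁ → 0 ≤ g i) (hhigh : ∀ i, e₂ ≤ s i → g i ≤ 0) :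
    ∃ θ > 0, ∀ i, s i + θ * g i ∈ Icc a b := by
  set δ := min (e₁ - a) (b - e₂)
  have hδ : 0 < δ := lt_min (sub_pos.2 ha) (sub_pos.2 hb)
  have hC : 0 < |C| + 1 := by positivity
  refine ⟨δ / (|C| + 1), by positivity, fun i => add_mem_Icc_of_inward (hs i) (δ := δ) ?_
    (min_le_left _ _) (min_le_right _ _) (fun h => ?_) (fun h => ?_)⟩
  · calc |δ / (|C| + 1) * g i| = δ / (|C| + 1) * |g i| := by
          rw [abs_mul, abs_of_pos (by positivity)]
      _ ≤ δ / (|C| + 1) * (|C| + 1) := by gcongr; linarith [hg i, le_abs_self C]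
      _ = δ := div_mul_cancel₀ δ hC.ne'
  · exact mul_nonneg (by positivity) (hlow i h)
  · exact mul_nonpos_of_nonneg_of_nonpos (by positivity) (hhigh i h)

theorem ConvexOn.le_chord {f : ℝ → ℝ} {a b t : ℝ} (hf : ConvexOn ℝ (Icc a b) f) (hab : a < b)
    (ht : t ∈ Icc a b) : f t ≤ f a + (f b - f a) / (b - a) * (t - a) := by
  have hba : 0 < b - a := sub_pos.2 hab
  have hconv := hf.2 (left_mem_Icc.2 hab.le) (right_mem_Icc.2 hab.le)
    (div_nonneg (sub_nonneg.2 ht.2) hba.le) (div_nonneg (sub_nonneg.2 ht.1) hba.le)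
    (by rw [← add_div, div_eq_one_iff_eq hba.ne']; ring)
  have hpt : (b - t) / (b - a) * a + (t - a) / (b - a) * b = t := by
    field_simp [hba.ne']; ring
  simp only [smul_eq_mul, hpt] at hconv
  calc f t ≤ _ := hconv
    _ = _ := by field_simp [hba.ne']; ring

/-- The constant `K_{a,b}`: the chord of `t ↦ t log t` over `[a,b]`, evaluated at `t = 1`. -/
noncomputable def entropyChordBound (a b : ℝ) : ℝ :=
  (a * (b - 1) / (b - a)) * log a + (b * (1 - a) / (b - a)) * log b

section

variable {α : Type*}

noncomputable def entropicFitness (A σ : α → ℝ) (ε : ℝ) (u : α) : ℝ :=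
  A u - ε * log (σ u)

theorem abs_entropicFitness_le {A σ : α → ℝ} {a b ε M : ℝ} (hσ : ∀ u, σ u ∈ Icc a b)
    (ha : 0 < a) (hε : 0 ≤ ε) (hAM : ∀ u, |A u| ≤ M) (u : α) :
    |entropicFitness A σ ε u| ≤ M + ε * max |log a| |log b| := by
  have hlog : |log (σ u)| ≤ max |log a| |log b| :=
    abs_le_max_abs_abs (log_le_log ha (hσ u).1) (log_le_log (ha.trans_le (hσ u).1) (hσ u).2)
  calc |A u - ε * log (σ u)| ≤ |A u| + |ε * log (σ u)| := abs_sub _ _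
    _ = |A u| + ε * |log (σ u)| := by rw [abs_mul, abs_of_nonneg hε]
    _ ≤ M + ε * max |log a| |log b| := by gcongr; exact hAM u

variable [MeasurableSpace α] {μ : Measure α}

theorem ConvexOn.integral_comp_le_chord [IsProbabilityMeasure μ] {f : ℝ → ℝ} {σ : α → ℝ}
    {a b : ℝ} (hf : ConvexOn ℝ (Icc a b) f) (hab : a < b) (hσ : ∀ u, σ u ∈ Icc a b)
    (hσi : Integrable σ μ) (hfσ : Integrable (fun u => f (σ u)) μ) :
    ∫ u, f (σ u) ∂μ ≤ f a + (f b - f a) / (b - a) * (∫ u, σ u ∂μ - a) := by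
  have hσa : Integrable (fun u => σ u - a) μ := hσi.sub (integrable_const a)
  have hchord : Integrable (fun u => f a + (f b - f a) / (b - a) * (σ u - a)) μ :=
    (integrable_const _).add (hσa.const_mul _)
  calc ∫ u, f (σ u) ∂μ ≤ ∫ u, f a + (f b - f a) / (b - a) * (σ u - a) ∂μ :=
        integral_mono hfσ hchord fun u => hf.le_chord hab (hσ u)
    _ = _ := by
      rw [integral_add (integrable_const _) (hσa.const_mul _), integral_const_mul,
        integral_sub hσi (integrable_const a)]
      simp

theorem abs_integral_mul_le_of_abs_le {f w : α → ℝ} {M : ℝ} (hf : ∀ u, |f u| ≤ M)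
    (hw : Integrable w μ) (hw0 : ∀ u, 0 ≤ w u) (hw1 : ∫ u, w u ∂μ = 1) :
    |∫ u, f u * w u ∂μ| ≤ M :=
  calc |∫ u, f u * w u ∂μ| ≤ ∫ u, M * w u ∂μ :=
        norm_integral_le_of_norm_le (f := fun u => f u * w u) (hw.const_mul M)
          (ae_of_all _ fun u => by
            rw [Real.norm_eq_abs, abs_mul, abs_of_nonneg (hw0 u)]
            exact mul_le_mul_of_nonneg_right (hf u) (hw0 u))
    _ = M := by rw [integral_const_mul, hw1, mul_one]

/-- `σ ∈ S_{a,b}`. -/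
structure IsBoundedDensity (μ : Measure α) (a b : ℝ) (σ : α → ℝ) : Prop where
  measurable : Measurable σ
  mem_Icc : ∀ u, σ u ∈ Icc a b
  integral_eq_one : ∫ u, σ u ∂μ = 1

namespace IsBoundedDensity

variable {a b : ℝ} {σ : α → ℝ}

theorem nonneg (h : IsBoundedDensity μ a b σ) (ha : 0 ≤ a) (u : α) : 0 ≤ σ u :=
  ha.trans (h.mem_Icc u).1

theorem integrable_comp [IsFiniteMeasure μ] (h : IsBoundedDensity μ a b σ) {φ : ℝ → ℝ}
    (hφ : Continuous φ) : Integrable (fun u => φ (σ u)) μ := by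
  obtain ⟨C, hC⟩ := isCompact_Icc.exists_bound_of_continuousOn hφ.continuousOn
  exact .of_bound (hφ.comp_aestronglyMeasurable h.measurable.aestronglyMeasurable) C
    (ae_of_all _ fun u => hC _ (h.mem_Icc u))

theorem integrable [IsFiniteMeasure μ] (h : IsBoundedDensity μ a b σ) : Integrable σ μ :=
  h.integrable_comp continuous_id

theorem integrable_log_mul [IsFiniteMeasure μ] (h : IsBoundedDensity μ a b σ) :
    Integrable (fun u => log (σ u) * σ u) μ :=
  (h.integrable_comp continuous_mul_log).congr (ae_of_all _ fun _ => mul_comm _ _)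

theorem integrable_mul_of_abs_le [IsFiniteMeasure μ] (h : IsBoundedDensity μ a b σ)
    {A : α → ℝ} {M : ℝ} (hAm : Measurable A) (hAM : ∀ u, |A u| ≤ M) :
    Integrable (fun u => A u * σ u) μ :=
  h.integrable.bdd_mul hAm.aestronglyMeasurable (ae_of_all _ hAM)

theorem one_le [IsProbabilityMeasure μ] (h : IsBoundedDensity μ a b σ) : 1 ≤ b :=
  calc (1 : ℝ) = ∫ u, σ u ∂μ := h.integral_eq_one.symm
    _ ≤ ∫ _, b ∂μ := integral_mono h.integrable (integrable_const b) fun u => (h.mem_Icc u).2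
    _ = b := by simp

theorem integral_log_mul_mem_Icc [IsProbabilityMeasure μ] (h : IsBoundedDensity μ a b σ)
    (ha : 0 ≤ a) (hab : a < b) :
    ∫ u, log (σ u) * σ u ∂μ ∈ Icc 0 (entropyChordBound a b) := by
  have hent := h.integrable_comp continuous_mul_log
  simp_rw [mul_comm (log _)]
  constructor
  · simpa [h.integral_eq_one] using convexOn_mul_log.map_integral_le
      continuous_mul_log.continuousOn isClosed_Ici
      (ae_of_all _ fun u => mem_Ici.2 (h.nonneg ha u)) h.integrable hent
  · have hconv : ConvexOn ℝ (Icc a b) fun t => t * log t :=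
      convexOn_mul_log.subset (fun t ht => ha.trans ht.1) (convex_Icc a b)
    calc _ ≤ _ := hconv.integral_comp_le_chord hab h.mem_Icc h.integrable hent
      _ = _ := by
        rw [h.integral_eq_one, entropyChordBound]
        field_simp [(sub_pos.2 hab).ne']
        ring

end IsBoundedDensity

noncomputable def replicator (μ : Measure α) (F σ : α → ℝ) (u : α) : ℝ :=
  (F u - ∫ v, F v * σ v ∂μ) * σ u

section Replicator

variable {F σ : α → ℝ}

theorem integral_add_mul_replicator (hFσ : Integrable (fun u => F u * σ u) μ)
    (hσ : Integrable σ μ) (hσ1 : ∫ u, σ u ∂μ = 1) (t : ℝ) :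
    ∫ u, (σ u + t * replicator μ F σ u) ∂μ = 1 := by
  have hrep : Integrable (replicator μ F σ) μ :=
    (hFσ.sub (hσ.const_mul _)).congr (ae_of_all _ fun _ => (sub_mul _ _ _).symm)
  have hrep0 : ∫ u, replicator μ F σ u ∂μ = 0 := by
    simp only [replicator, sub_mul]
    rw [integral_sub hFσ (hσ.const_mul _), integral_const_mul, hσ1, mul_one, sub_self]
  rw [integral_add hσ (hrep.const_mul t), integral_const_mul, hrep0, mul_zero, add_zero, hσ1]

theorem abs_replicator_le {C b : ℝ} (hF : ∀ u, |F u| ≤ C) (hσ : Integrable σ μ)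
    (hσ0 : ∀ u, 0 ≤ σ u) (hσb : ∀ u, σ u ≤ b) (hσ1 : ∫ u, σ u ∂μ = 1) (u : α) :
    |replicator μ F σ u| ≤ 2 * C * b := by
  have hmean := abs_integral_mul_le_of_abs_le hF hσ hσ0 hσ1
  have hC : 0 ≤ C := (abs_nonneg _).trans (hF u)
  rw [replicator, abs_mul, abs_of_nonneg (hσ0 u)]
  calc |F u - ∫ v, F v * σ v ∂μ| * σ u ≤ (2 * C) * σ u := by
        gcongr
        · exact hσ0 u
        · linarith [abs_sub (F u) (∫ v, F v * σ v ∂μ), hF u]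
    _ ≤ 2 * C * b := by gcongr; exact hσb u

end Replicator

section EntropicFitness

variable {A σ : α → ℝ} {a b ε M : ℝ}

theorem integral_entropicFitness_mul (hAσ : Integrable (fun u => A u * σ u) μ)
    (hlogσ : Integrable (fun u => log (σ u) * σ u) μ) :
    ∫ u, entropicFitness A σ ε u * σ u ∂μ
      = ∫ u, A u * σ u ∂μ - ε * ∫ u, log (σ u) * σ u ∂μ := by
  simp only [entropicFitness, sub_mul, mul_assoc]
  rw [integral_sub hAσ (hlogσ.const_mul ε), integral_const_mul]

theorem fJ_add_fEps_eq_replicator {d : ℕ}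
    {J : EuclideanSpace ℝ (Fin d) → α → EuclideanSpace ℝ (Fin d) → α → ℝ}
    {x x' : EuclideanSpace ℝ (Fin d)} {σ' : α → ℝ}
    (hAσ : Integrable (fun u => (∫ u', J x u x' u' * σ' u' ∂μ) * σ u) μ)
    (hlogσ : Integrable (fun u => log (σ u) * σ u) μ) (u : α) :
    fJ μ J x σ x' σ' u + fEps μ ε σ u =
      replicator μ (entropicFitness (fun u => ∫ u', J x u x' u' * σ' u' ∂μ) σ ε) σ u := by
  rw [replicator, integral_entropicFitness_mul hAσ hlogσ, fJ, fEps, entropicFitness]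
  ring

theorem integral_entropicFitness_mul_mem_Icc [IsProbabilityMeasure μ]
    (hσ : IsBoundedDensity μ a b σ) (ha : 0 < a) (hab : a < b) (hε : 0 ≤ ε)
    (hAm : Measurable A) (hAM : ∀ u, |A u| ≤ M) :
    ∫ u, entropicFitness A σ ε u * σ u ∂μ ∈ Icc (-M - ε * entropyChordBound a b) M := by
  rw [integral_entropicFitness_mul (hσ.integrable_mul_of_abs_le hAm hAM) hσ.integrable_log_mul]
  obtain ⟨hB₁, hB₂⟩ := abs_le.1 <|
    abs_integral_mul_le_of_abs_le hAM hσ.integrable (hσ.nonneg ha.le) hσ.integral_eq_one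
  obtain ⟨hc₀, hcK⟩ := hσ.integral_log_mul_mem_Icc ha.le hab
  constructor
  · nlinarith [mul_le_mul_of_nonneg_left hcK hε]
  · nlinarith [mul_nonneg hε hc₀]

theorem replicator_entropicFitness_nonneg [IsProbabilityMeasure μ]
    (hσ : IsBoundedDensity μ a b σ) (ha : 0 < a) (hab : a < b) (hε : 0 < ε)
    (hAm : Measurable A) (hAM : ∀ u, |A u| ≤ M) {u : α} (hu : σ u ≤ exp (-(2 * M) / ε)) :
    0 ≤ replicator μ (entropicFitness A σ ε) σ u := by
  have hmean := (integral_entropicFitness_mul_mem_Icc hσ ha hab hε.le hAm hAM).2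
  have hlog : ε * log (σ u) ≤ -(2 * M) := by
    rw [← le_div_iff₀' hε, log_le_iff_le_exp (ha.trans_le (hσ.mem_Icc u).1)]
    exact hu
  refine mul_nonneg (sub_nonneg.2 ?_) (hσ.nonneg ha.le u)
  rw [entropicFitness]
  linarith [(abs_le.1 (hAM u)).1]

theorem replicator_entropicFitness_nonpos [IsProbabilityMeasure μ]
    (hσ : IsBoundedDensity μ a b σ) (ha : 0 < a) (hab : a < b) (hε : 0 < ε)
    (hAm : Measurable A) (hAM : ∀ u, |A u| ≤ M) {u : α}
    (hu : exp (2 * M / ε + entropyChordBound a b) ≤ σ u) :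
    replicator μ (entropicFitness A σ ε) σ u ≤ 0 := by
  have hmean := (integral_entropicFitness_mul_mem_Icc hσ ha hab hε.le hAm hAM).1
  have hlog : 2 * M + ε * entropyChordBound a b ≤ ε * log (σ u) := by
    have h := (le_log_iff_exp_le (ha.trans_le (hσ.mem_Icc u).1)).2 hu
    rw [← div_le_iff₀' hε, add_div, mul_div_cancel_left₀ _ hε.ne']
    exact h
  refine mul_nonpos_of_nonpos_of_nonneg (sub_nonpos.2 ?_) (hσ.nonneg ha.le u)
  rw [entropicFitness]
  linarith [(abs_le.1 (hAM u)).2]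

end EntropicFitness

end

theorem entropic_compatibility_general
    {U : Type*} [MeasurableSpace U]
    {d : ℕ} (η : Measure U) [IsProbabilityMeasure η]
    (ε lam M a b : ℝ) (hε : 0 < ε) (hlam : 0 < lam) (hM : 0 ≤ M)
    (J : EuclideanSpace ℝ (Fin d) → U → EuclideanSpace ℝ (Fin d) → U → ℝ)
    (hJb : ∀ x u x' u', |J x u x' u'| ≤ M)
    (hJm : ∀ x x', Measurable (fun p : U × U => J x p.1 x' p.2))
    (ha0 : 0 < a)
    (ha : a < Real.exp (-(2 * M) / ε))
    (hb : b > Real.exp (2 * M / ε +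
      ((a * (b - 1) / (b - a)) * Real.log a + (b * (1 - a) / (b - a)) * Real.log b))) :
    ∀ (σ σ' : U → ℝ), Measurable σ → Measurable σ' →
      (∀ u, σ u ∈ Set.Icc a b) → (∀ u, σ' u ∈ Set.Icc a b) →
      (∫ u, σ u ∂η) = 1 → (∫ u, σ' u ∂η) = 1 →
    ∀ x x' : EuclideanSpace ℝ (Fin d),
      ∃ θ : ℝ, 0 < θ ∧
        (∀ u, σ u + θ * lam * (fJ η J x σ x' σ' u + fEps η ε σ u) ∈ Set.Icc a b) ∧
        (∫ u, (σ u + θ * lam * (fJ η J x σ x' σ' u + fEps η ε σ u)) ∂η) = 1 := by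
  intro σ σ' hσm hσ'm hσab hσ'ab hσ1 hσ'1 x x'
  have hσ : IsBoundedDensity η a b σ := ⟨hσm, hσab, hσ1⟩
  have hσ' : IsBoundedDensity η a b σ' := ⟨hσ'm, hσ'ab, hσ'1⟩
  have hab : a < b := ha.trans_le <|
    (exp_le_one_iff.2 (div_nonpos_of_nonpos_of_nonneg (by linarith) hε.le)).trans hσ.one_le
  set A : U → ℝ := fun u => ∫ u', J x u x' u' * σ' u' ∂η
  have hAm : Measurable A :=
    ((hJm x x').mul (hσ'm.comp measurable_snd)).stronglyMeasurable.integral_prod_right'.measurable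
  have hAM : ∀ u, |A u| ≤ M := fun u =>
    abs_integral_mul_le_of_abs_le (hJb x u x') hσ'.integrable (hσ'.nonneg ha0.le) hσ'1
  have hF := abs_entropicFitness_le hσab ha0 hε.le hAM
  have hFm : Measurable (entropicFitness A σ ε) := hAm.sub (measurable_const.mul hσm.log)
  have hdir := fJ_add_fEps_eq_replicator (ε := ε) (x := x) (x' := x')
    (hσ.integrable_mul_of_abs_le hAm hAM) hσ.integrable_log_mul
  obtain ⟨θ, hθ, hmem⟩ := exists_pos_forall_add_mul_mem_Icc hσab
    (abs_replicator_le hF hσ.integrable (hσ.nonneg ha0.le) (fun u => (hσab u).2) hσ1) ha hb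
    (fun _ => replicator_entropicFitness_nonneg hσ ha0 hab hε hAm hAM)
    (fun _ => replicator_entropicFitness_nonpos hσ ha0 hab hε hAm hAM)
  refine ⟨θ / lam, div_pos hθ hlam, fun u => ?_, ?_⟩
  · rw [div_mul_cancel₀ θ hlam.ne', hdir]
    exact hmem u
  · simp only [div_mul_cancel₀ θ hlam.ne', hdir]
    exact integral_add_mul_replicator (hσ.integrable_mul_of_abs_le hFm hF) hσ.integrable hσ1 θ

/-- Compatibility: moving from `σ ∈ S_{a,b}` in the direction `f^J + f^ε` stays in
`S_{a,b}` for a small positive time, for the stated choice of the bounds `a, b`. -/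
theorem entropic_compatibility
    {U : Type*} [MetricSpace U] [CompactSpace U] [MeasurableSpace U] [BorelSpace U]
    {d : ℕ} (η : Measure U) [IsProbabilityMeasure η]
    (ε lam M a b : ℝ) (hε : 0 < ε) (hlam : 0 < lam) (hM : 0 ≤ M)
    (J : EuclideanSpace ℝ (Fin d) → U → EuclideanSpace ℝ (Fin d) → U → ℝ)
    (hJb : ∀ x u x' u', |J x u x' u'| ≤ M)
    (hJm : ∀ x x', Measurable (fun p : U × U => J x p.1 x' p.2))
    (ha0 : 0 < a)
    (ha : a < Real.exp (-(2 * M) / ε))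
    (hb : b > Real.exp (2 * M / ε +
      ((a * (b - 1) / (b - a)) * Real.log a + (b * (1 - a) / (b - a)) * Real.log b))) :
    ∀ (σ σ' : U → ℝ), Measurable σ → Measurable σ' →
      (∀ u, σ u ∈ Set.Icc a b) → (∀ u, σ' u ∈ Set.Icc a b) →
      (∫ u, σ u ∂η) = 1 → (∫ u, σ' u ∂η) = 1 →
    ∀ x x' : EuclideanSpace ℝ (Fin d),
      ∃ θ : ℝ, 0 < θ ∧
        (∀ u, σ u + θ * lam * (fJ η J x σ x' σ' u + fEps η ε σ u) ∈ Set.Icc a b) ∧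
        (∫ u, (σ u + θ * lam * (fJ η J x σ x' σ' u + fEps η ε σ u)) ∂η) = 1 :=
  entropic_compatibility_general η ε lam M a b hε hlam hM J hJb hJm ha0 ha hb
end

section
/- (Strong-convexity gradient-domination inequality for the strategy energy.) Let U carry a probability measure η, let g : U → ℝ be bounded measurable, ε > 0, 0 < a < b, and define G(σ) = ∫_U [−g(u)σ(u) + ε(σ(u)log σ(u) − σ(u) + 1)] dη(u) on S_{a,b}. Let σ* ∈ S_{a,b} be the Gibbs minimizer σ*(u) ∝ exp(g(u)/ε) (assumed to take values in [a,b]), let c > 0 satisfy c ≤ ε/s for s ∈ [a,b], and for σ ∈ S_{a,b} let g'_u(σ(u)) = −g(u) + ε log σ(u) and m(σ) = ∫_U g'_v(σ(v))σ(v) dη(v). Then ‖g'_·(σ(·)) − m(σ)‖²_{L²_η} ≥ (c/2)[G(σ) − G(σ*)]. -/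
/-!
Write `Δ(u)` for the difference of the energy densities of `σ` and `σ*` at `u`, `d = σ - σ*` and
`φ = -g + ε log σ`. Convexity of `s ↦ s log s` gives `Δ ≤ φ d`. Strong convexity of `s log s` on
`(0, b]`, with modulus `1 / b ≥ c / ε`, together with the Gibbs condition that `-g + ε log σ*` is a
constant `K`, gives `K d + (c / 2) d² ≤ Δ`. Young's inequality
`(φ - m) d ≤ (φ - m)² / c + (c / 4) d²` then yields, pointwise,
`(c / 2) Δ ≤ (φ - m)² + c (m - K / 2) d`, and the last term integrates to zero because
`∫ σ = ∫ σ* = 1`. This replaces the Cauchy–Schwarz step of the paper's argument.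
-/

open MeasureTheory Real

/-- The strategy energy `G`. -/
noncomputable def stratEnergy {U : Type*} [MeasurableSpace U]
    (η : Measure U) (ε : ℝ) (g : U → ℝ) (σ : U → ℝ) : ℝ :=
  ∫ u, (-(g u) * σ u + ε * (σ u * Real.log (σ u) - σ u + 1)) ∂η

open Set

noncomputable def energyDensity (ε γ s : ℝ) : ℝ :=
  -γ * s + ε * (s * log s - s + 1)

theorem stratEnergy_eq_integral_energyDensity {U : Type*} [MeasurableSpace U] (η : Measure U)
    (ε : ℝ) (g σ : U → ℝ) :
    stratEnergy η ε g σ = ∫ u, energyDensity ε (g u) (σ u) ∂η :=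
  rfl

theorem mul_log_sub_le_sub {s t : ℝ} (hs : 0 < s) (ht : 0 < t) :
    t * (log s - log t) ≤ s - t := by
  calc t * (log s - log t) = t * log (s / t) := by rw [log_div hs.ne' ht.ne']
    _ ≤ t * (s / t - 1) := mul_le_mul_of_nonneg_left (log_le_sub_one_of_pos (div_pos hs ht)) ht.le
    _ = s - t := by field_simp

/-- Strong convexity of `x ↦ x log x` on `(0, b]`, where its second derivative `1 / x` is at least
`1 / b`. -/
theorem sq_div_le_mul_log_sub {b s t : ℝ} (hs : s ∈ Ioc 0 b) (ht : t ∈ Ioc 0 b) :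
    (s - t) ^ 2 / (2 * b) ≤ s * (log s - log t) - s + t := by
  obtain ⟨ht0, htb⟩ := ht
  have hb : 0 < b := ht0.trans_le htb
  set F : ℝ → ℝ := fun x ↦ x * log x - x * log t - x + t - (x - t) ^ 2 / (2 * b)
  have hF : ∀ x, 0 < x → HasDerivAt F (log (x / t) - (x - t) / b) x := by
    intro x hx
    have := ((((hasDerivAt_mul_log hx.ne').sub ((hasDerivAt_id x).mul_const (log t))).sub
      (hasDerivAt_id x)).add_const t).sub ((((hasDerivAt_id x).sub_const t).pow 2).div_const (2 * b))
    refine this.congr_deriv ?_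
    simp only [id, log_div hx.ne' ht0.ne']
    field_simp
    ring
  have hdiff : ∀ x ∈ Ioi (0 : ℝ), DifferentiableAt ℝ F x := fun x hx ↦ (hF x hx).differentiableAt
  have hmin : IsMinOn F (Ioc 0 b) t := by
    refine isMinOn_Ioc_of_deriv (hdiff t ht0).continuousAt (hdiff b hb).continuousAt
      (fun x hx ↦ (hdiff x hx.1).differentiableWithinAt)
      (fun x hx ↦ (hdiff x (ht0.trans hx.1)).differentiableWithinAt) ?_ ?_
    · intro x ⟨hx0, hxt⟩
      rw [(hF x hx0).deriv, sub_nonpos]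
      calc log (x / t) ≤ x / t - 1 := log_le_sub_one_of_pos (div_pos hx0 ht0)
        _ = (x - t) / t := by field_simp
        _ ≤ (x - t) / b := by rw [div_le_div_iff₀ ht0 hb]; nlinarith
    · intro x ⟨htx, hxb⟩
      have hx0 := ht0.trans htx
      rw [(hF x hx0).deriv, sub_nonneg]
      calc (x - t) / b ≤ (x - t) / x := div_le_div_of_nonneg_left (by linarith) hx0 hxb.le
        _ = 1 - (x / t)⁻¹ := by field_simp
        _ ≤ log (x / t) := one_sub_inv_le_log_of_pos (div_pos hx0 ht0)
  have hFs : F t ≤ F s := hmin hs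
  simp only [F, sub_self, ne_eq, OfNat.ofNat_ne_zero, not_false_eq_true, zero_pow,
    zero_div] at hFs
  linarith

section energyDensity

variable {ε γ s t : ℝ}

theorem energyDensity_sub_le (hε : 0 ≤ ε) (hs : 0 < s) (ht : 0 < t) :
    energyDensity ε γ s - energyDensity ε γ t ≤ (-γ + ε * log s) * (s - t) := by
  have h := mul_le_mul_of_nonneg_left (mul_log_sub_le_sub hs ht) hε
  unfold energyDensity
  linarith

theorem le_energyDensity_sub {b c : ℝ} (hε : 0 ≤ ε) (hcb : c ≤ ε / b) (hs : s ∈ Ioc 0 b)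
    (ht : t ∈ Ioc 0 b) :
    (-γ + ε * log t) * (s - t) + c / 2 * (s - t) ^ 2 ≤
      energyDensity ε γ s - energyDensity ε γ t := by
  have hb : 0 < b := hs.1.trans_le hs.2
  have h := mul_le_mul_of_nonneg_left (sq_div_le_mul_log_sub hs ht) hε
  have hc : c / 2 * (s - t) ^ 2 ≤ ε * ((s - t) ^ 2 / (2 * b)) := by
    rw [le_div_iff₀ hb] at hcb
    rw [mul_div, le_div_iff₀ (by positivity)]
    nlinarith [sq_nonneg (s - t)]
  unfold energyDensity
  linarith

theorem half_mul_energyDensity_sub_le {b c : ℝ} (hε : 0 ≤ ε) (hc : 0 < c) (hcb : c ≤ ε / b)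
    (hs : s ∈ Ioc 0 b) (ht : t ∈ Ioc 0 b) (m : ℝ) :
    c / 2 * (energyDensity ε γ s - energyDensity ε γ t) ≤
      (-γ + ε * log s - m) ^ 2 + c * (m - (-γ + ε * log t) / 2) * (s - t) := by
  have hconvex := mul_le_mul_of_nonneg_left (energyDensity_sub_le hε hs.1 ht.1 (γ := γ)) hc.le
  have hstrong := mul_le_mul_of_nonneg_left (le_energyDensity_sub hε hcb hs ht (γ := γ)) hc.le
  nlinarith [sq_nonneg (-γ + ε * log s - m - c / 2 * (s - t))]

end energyDensity

theorem integrable_comp_of_continuousOn_isCompact {α X : Type*} [MeasurableSpace α]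
    {μ : Measure α} [IsFiniteMeasure μ] [TopologicalSpace X] [MeasurableSpace X] {F : X → ℝ}
    {K : Set X} (hK : IsCompact K) (hFK : ContinuousOn F K) (hF : Measurable F) {v : α → X}
    (hv : Measurable v) (hvK : ∀ x, v x ∈ K) : Integrable (fun x ↦ F (v x)) μ :=
  let ⟨C, hC⟩ := hK.exists_bound_of_continuousOn hFK
  .of_bound (hF.comp hv).aestronglyMeasurable C (.of_forall fun x ↦ hC _ (hvK x))

theorem half_mul_stratEnergy_sub_le_of_marginal_const {U : Type*} [MeasurableSpace U]
    {η : Measure U} [IsFiniteMeasure η] {ε a b c M K : ℝ} {g σ τ : U → ℝ}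
    (hε : 0 ≤ ε) (ha : 0 < a) (hc : 0 < c) (hcb : c ≤ ε / b)
    (hg : Measurable g) (hgb : ∀ u, |g u| ≤ M)
    (hσ : Measurable σ) (hσb : ∀ u, σ u ∈ Icc a b) (hτ : Measurable τ) (hτb : ∀ u, τ u ∈ Icc a b)
    (hστ : ∫ u, σ u ∂η = ∫ u, τ u ∂η) (hτK : ∀ u, -g u + ε * log (τ u) = K) (m : ℝ) :
    c / 2 * (stratEnergy η ε g σ - stratEnergy η ε g τ) ≤
      ∫ u, (-g u + ε * log (σ u) - m) ^ 2 ∂η := by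
  have hIoc : ∀ {ρ : U → ℝ}, (∀ u, ρ u ∈ Icc a b) → ∀ u, ρ u ∈ Ioc 0 b :=
    fun hρ u ↦ ⟨ha.trans_le (hρ u).1, (hρ u).2⟩
  have hK : IsCompact (Icc (-M) M ×ˢ Icc a b) := isCompact_Icc.prod isCompact_Icc
  have hmem : ∀ {ρ : U → ℝ}, (∀ u, ρ u ∈ Icc a b) → ∀ u, (g u, ρ u) ∈ Icc (-M) M ×ˢ Icc a b :=
    fun hρ u ↦ ⟨abs_le.mp (hgb u), hρ u⟩
  have hintE : ∀ {ρ : U → ℝ}, Measurable ρ → (∀ u, ρ u ∈ Icc a b) →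
      Integrable (fun u ↦ energyDensity ε (g u) (ρ u)) η := fun hρ hρb ↦
    integrable_comp_of_continuousOn_isCompact (F := fun p ↦ energyDensity ε p.1 p.2) hK
      (by unfold energyDensity; fun_prop) (by unfold energyDensity; fun_prop)
      (hg.prodMk hρ) (hmem hρb)
  have hcont : ContinuousOn (fun p : ℝ × ℝ ↦ (-p.1 + ε * log p.2 - m) ^ 2)
      (Icc (-M) M ×ˢ Icc a b) := by
    have : ∀ p ∈ Icc (-M) M ×ˢ Icc a b, p.2 ≠ 0 := fun p hp ↦ (ha.trans_le hp.2.1).ne'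
    fun_prop (disch := assumption)
  have hintR : Integrable (fun u ↦ (-g u + ε * log (σ u) - m) ^ 2) η :=
    integrable_comp_of_continuousOn_isCompact (F := fun p ↦ (-p.1 + ε * log p.2 - m) ^ 2) hK
      hcont (by fun_prop) (hg.prodMk hσ) (hmem hσb)
  have hintσ : Integrable σ η :=
    integrable_comp_of_continuousOn_isCompact isCompact_Icc continuousOn_id measurable_id hσ hσb
  have hintτ : Integrable τ η :=
    integrable_comp_of_continuousOn_isCompact isCompact_Icc continuousOn_id measurable_id hτ hτb
  have hintd : Integrable (fun u ↦ σ u - τ u) η := hintσ.sub hintτ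
  calc c / 2 * (stratEnergy η ε g σ - stratEnergy η ε g τ)
      = ∫ u, c / 2 * (energyDensity ε (g u) (σ u) - energyDensity ε (g u) (τ u)) ∂η := by
        rw [stratEnergy_eq_integral_energyDensity, stratEnergy_eq_integral_energyDensity,
          ← integral_sub (hintE hσ hσb) (hintE hτ hτb), integral_const_mul]
    _ ≤ ∫ u, ((-g u + ε * log (σ u) - m) ^ 2 + c * (m - K / 2) * (σ u - τ u)) ∂η := by
        refine integral_mono (((hintE hσ hσb).sub (hintE hτ hτb)).const_mul _)
          (hintR.add (hintd.const_mul _)) fun u ↦ ?_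
        rw [← hτK u]
        exact half_mul_energyDensity_sub_le hε hc hcb (hIoc hσb u) (hIoc hτb u) m
    _ = ∫ u, (-g u + ε * log (σ u) - m) ^ 2 ∂η := by
        rw [integral_add hintR (hintd.const_mul _), integral_const_mul,
          integral_sub hintσ hintτ, hστ, sub_self, mul_zero, add_zero]

/-- Strong-convexity gradient-domination inequality for the strategy energy. -/
theorem strategy_energy_gradient_domination
    {U : Type*} [MeasurableSpace U] (η : Measure U) [IsProbabilityMeasure η]
    (ε a b c : ℝ) (hε : 0 < ε) (ha : 0 < a) (hab : a < b)
    (g : U → ℝ) (hg : Measurable g) (M : ℝ) (hgb : ∀ u, |g u| ≤ M)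
    (σstar : U → ℝ)
    (hσstar : ∀ u, σstar u = Real.exp (g u / ε) / ∫ v, Real.exp (g v / ε) ∂η)
    (hσstarb : ∀ u, σstar u ∈ Set.Icc a b)
    (hc : 0 < c) (hcb : ∀ s ∈ Set.Icc a b, c ≤ ε / s) :
    ∀ σ : U → ℝ, Measurable σ → (∀ u, σ u ∈ Set.Icc a b) → (∫ u, σ u ∂η) = 1 →
      (c / 2) * (stratEnergy η ε g σ - stratEnergy η ε g σstar)
        ≤ ∫ u, ((-(g u) + ε * Real.log (σ u))
            - ∫ v, (-(g v) + ε * Real.log (σ v)) * σ v ∂η) ^ 2 ∂η := by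
  intro σ hσ hσb hσ1
  set Z := ∫ v, exp (g v / ε) ∂η
  obtain ⟨u₀⟩ := nonempty_of_isProbabilityMeasure η
  have hZ : Z ≠ 0 := fun hZ ↦ by
    have := (hσstarb u₀).1
    rw [hσstar, hZ, div_zero] at this
    linarith
  have hσstar_eq : σstar = fun u ↦ exp (g u / ε) / Z := funext hσstar
  have hσstar1 : ∫ u, σstar u ∂η = 1 := by rw [hσstar_eq, integral_div, div_self hZ]
  -- the Gibbs density is a critical point of `G` under the constraint `∫ σ = 1`
  have hmarginal : ∀ u, -g u + ε * log (σstar u) = -(ε * log Z) := fun u ↦ by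
    rw [hσstar u, log_div (exp_ne_zero _) hZ, log_exp, mul_sub, mul_div_cancel₀ _ hε.ne']
    ring
  exact half_mul_stratEnergy_sub_le_of_marginal_const hε.le ha hc (hcb b ⟨hab.le, le_rfl⟩) hg hgb
    hσ hσb (by rw [hσstar_eq]; fun_prop) hσstarb (hσ1.trans hσstar1.symm) hmarginal _
end
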